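/- arXiv:2004.05528 — 4 statements merged into one kernel-verified Lean document; each statement's English description precedes it below -/
import Mathlib

section
/- Let λ₁, …, λₙ ∈ (-1,1), n ≥ 2, and let M be the n×n matrix with M_{ij} = 1/(1-λᵢλⱼ). Then det M = (1/(1-λ₁²)) · ∏_{i=2}^{n} ((λᵢ-λ₁)/(1-λᵢλ₁))² · det M', where M' is the (n-1)×(n-1) matrix with entries M'_{ij} = 1/(1-λᵢλⱼ) for i,j ∈ {2,…,n}. -/
/-!
Eliminating the first row and column of `M` leaves `M₀₀` times the determinant of the Schur
complement, and for the kernel `1 / (1 - x y)` the Schur complement of the pivot at `λ₁` is again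
the same kernel, rescaled on both sides by the Blaschke factors `(λᵢ - λ₁) / (1 - λᵢ λ₁)`.
-/

open Matrix

namespace Matrix

variable {K : Type*} [Field K] {n : ℕ}

theorem det_succ_eq_mul_det_schurComplement (M : Matrix (Fin (n + 1)) (Fin (n + 1)) K)
    (h : M 0 0 ≠ 0) :
    M.det = M 0 0 *
      (of fun i j : Fin n => M i.succ j.succ - M i.succ 0 / M 0 0 * M 0 j.succ).det := by
  set c : Fin (n + 1) → K := Fin.cases 0 fun i => -(M i.succ 0 / M 0 0)
  set A : Matrix (Fin (n + 1)) (Fin (n + 1)) K := of fun i j => M i j + c i * M 0 j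
  have hA : A.det = M.det := det_eq_of_forall_row_eq_smul_add_const c 0 rfl fun _ _ => rfl
  have hA_col : ∀ i : Fin n, A i.succ 0 = 0 := fun i => by
    simp only [A, c, of_apply, Fin.cases_succ]
    field_simp
    ring
  have hA_minor : A.submatrix Fin.succ Fin.succ =
      of fun i j : Fin n => M i.succ j.succ - M i.succ 0 / M 0 0 * M 0 j.succ := by
    ext i j
    simp only [A, c, submatrix_apply, of_apply, Fin.cases_succ]
    ring
  rw [← hA, det_succ_column_zero, Fin.sum_univ_succ]
  simp [hA_col, hA_minor, A, c]

end Matrix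

theorem one_div_one_sub_mul_schurComplement {K : Type*} [Field K] (a x y : K)
    (hxa : 1 - x * a ≠ 0) (hya : 1 - y * a ≠ 0) (hxy : 1 - x * y ≠ 0) :
    1 / (1 - x * y) - 1 / (1 - x * a) / (1 / (1 - a * a)) * (1 / (1 - a * y)) =
      (y - a) / (1 - y * a) * ((x - a) / (1 - x * a) * (1 / (1 - x * y))) := by
  have hay : 1 - a * y ≠ 0 := by rwa [mul_comm]
  field_simp
  ring

theorem one_sub_mul_ne_zero_of_mem_Ioo {x y : ℝ} (hx : x ∈ Set.Ioo (-1 : ℝ) 1)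
    (hy : y ∈ Set.Ioo (-1 : ℝ) 1) : 1 - x * y ≠ 0 := by
  have : |x * y| < 1 := by
    rw [abs_mul]
    exact mul_lt_one_of_nonneg_of_lt_one_right (abs_lt.2 hx).le (abs_nonneg y) (abs_lt.2 hy)
  linarith [le_abs_self (x * y)]

theorem stmt_5 (n : ℕ) (l : Fin (n + 1) → ℝ) (hl : ∀ i, l i ∈ Set.Ioo (-1 : ℝ) 1) :
    Matrix.det (Matrix.of fun i j : Fin (n + 1) => 1 / (1 - l i * l j)) =
      (1 / (1 - l 0 ^ 2)) * (∏ i : Fin n, ((l i.succ - l 0) / (1 - l i.succ * l 0)) ^ 2) *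
        Matrix.det (Matrix.of fun i j : Fin n => 1 / (1 - l i.succ * l j.succ)) := by
  have hne : ∀ i j, 1 - l i * l j ≠ 0 := fun i j => one_sub_mul_ne_zero_of_mem_Ioo (hl i) (hl j)
  set c : Fin n → ℝ := fun i => (l i.succ - l 0) / (1 - l i.succ * l 0)
  set D : Matrix (Fin n) (Fin n) ℝ := of fun i j => 1 / (1 - l i.succ * l j.succ)
  have hschur : (of fun i j : Fin n => 1 / (1 - l i.succ * l j.succ) -
        1 / (1 - l i.succ * l 0) / (1 / (1 - l 0 * l 0)) * (1 / (1 - l 0 * l j.succ))) =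
      of fun i j => c j * (of fun i j => c i * D i j) i j := by
    ext i j
    exact one_div_one_sub_mul_schurComplement _ _ _ (hne _ _) (hne _ _) (hne _ _)
  rw [det_succ_eq_mul_det_schurComplement _ (by simpa using one_div_ne_zero (hne 0 0))]
  simp only [of_apply]
  rw [hschur, det_mul_row, det_mul_column, Finset.prod_pow]
  ring
end

section
/- Let A ∈ ℝ^{n×n} have n distinct real eigenvalues λ₁,…,λₙ ∈ (-1,1) with diagonalization A = P diag(λ₁,…,λₙ) P⁻¹, and let qᵢ denote the i-th row of P⁻¹ (a left eigenvector). Then for B ∈ ℝ^{n×1}, det(G_∞) = (det P)² · [∏_{1≤i<j≤n} ((λⱼ-λᵢ)/(1-λᵢλⱼ))²] · ∏_{i=1}^{n} (qᵢB)²/(1-λᵢ²). -/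
/-!
Diagonalising `A = P D P⁻¹` turns the Grammian into `P C Pᵀ`, where summing the geometric series
entrywise gives `C = diag(q) K diag(q)` with `q = P⁻¹B` and `K` the Cauchy-type matrix
`K i j = (1 - λᵢλⱼ)⁻¹`. Its determinant is computed by one step of Gaussian elimination: the Schur
complement of the corner entry of `K` is again of Cauchy type, rescaled by diagonal matrices on both
sides, so induction on the size gives the product formula.
-/

open Matrix Finset

theorem Matrix.det_succ_eq_mul_det_schur {K : Type*} [Field K] {n : ℕ}
    (M : Matrix (Fin (n + 1)) (Fin (n + 1)) K) (h : M 0 0 ≠ 0) :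
    M.det = M 0 0 *
      (of fun i j : Fin n => M i.succ j.succ - M i.succ 0 / M 0 0 * M 0 j.succ).det := by
  set c : Fin (n + 1) → K := Fin.cons 0 fun i => M i.succ 0 / M 0 0
  set R : Matrix (Fin (n + 1)) (Fin (n + 1)) K := of fun i j => M i j - c i * M 0 j
  have hR0 : ∀ j, R 0 j = M 0 j := by simp [R, c]
  have hcol : ∀ i : Fin n, R i.succ 0 = 0 := fun i => by simp [R, c, h]
  rw [det_eq_of_forall_row_eq_smul_add_const (B := R) c 0 rfl fun i j => by simp [hR0, R],
    det_succ_column_zero, Fin.sum_univ_succ]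
  simp only [hcol, hR0, mul_zero, zero_mul, sum_const_zero, add_zero, Fin.val_zero, pow_zero,
    one_mul, Fin.succAbove_zero]
  rfl

theorem Matrix.det_of_inv_one_sub_mul {K : Type*} [Field K] {n : ℕ} (x y : Fin n → K)
    (h : ∀ i j, 1 - x i * y j ≠ 0) :
    (of fun i j => (1 - x i * y j)⁻¹).det =
      (∏ i, ∏ j ∈ Ioi i, (x j - x i) * (y j - y i) / ((1 - x i * y j) * (1 - x j * y i))) *
        ∏ i, (1 - x i * y i)⁻¹ := by
  induction n with
  | zero => simp
  | succ n ih =>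
    set d₁ : Fin n → K := fun i => (x i.succ - x 0) / (1 - x i.succ * y 0)
    set d₂ : Fin n → K := fun j => (y j.succ - y 0) / (1 - x 0 * y j.succ)
    have hschur : (of fun i j : Fin n => (1 - x i.succ * y j.succ)⁻¹ -
          (1 - x i.succ * y 0)⁻¹ / (1 - x 0 * y 0)⁻¹ * (1 - x 0 * y j.succ)⁻¹) =
        diagonal d₁ * (of fun i j => (1 - x i.succ * y j.succ)⁻¹) * diagonal d₂ := by
      ext i j
      have := h i.succ j.succ
      have := h i.succ 0
      have := h 0 0
      have : 1 - y j.succ * x 0 ≠ 0 := by rw [mul_comm]; exact h 0 j.succ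
      simp only [mul_diagonal, diagonal_mul, of_apply, d₁, d₂]
      field_simp
      ring
    rw [det_succ_eq_mul_det_schur _ (by simpa using h 0 0)]
    simp only [of_apply]
    rw [hschur, det_mul, det_mul, det_diagonal, det_diagonal,
      ih _ _ fun i j => h i.succ j.succ, Fin.prod_univ_succ, Fin.prod_univ_succ (n := n),
      Fin.prod_Ioi_zero]
    simp only [Fin.prod_Ioi_succ]
    have hd : ∀ j, d₁ j * d₂ j = (x j.succ - x 0) * (y j.succ - y 0) /
        ((1 - x 0 * y j.succ) * (1 - x j.succ * y 0)) := fun j => by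
      rw [div_mul_div_comm, mul_comm (1 - x j.succ * y 0)]
    rw [← prod_congr rfl fun j _ => hd j, prod_mul_distrib]
    ring

theorem Matrix.det_of_inv_one_sub_mul_self {K : Type*} [Field K] {n : ℕ} (l : Fin n → K)
    (h : ∀ i j, 1 - l i * l j ≠ 0) :
    (of fun i j => (1 - l i * l j)⁻¹).det =
      (∏ i, ∏ j ∈ Ioi i, ((l j - l i) / (1 - l i * l j)) ^ 2) * ∏ i, (1 - l i ^ 2)⁻¹ := by
  rw [det_of_inv_one_sub_mul l l h]
  simp only [mul_comm (l _) (l _), sq, div_mul_div_comm]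

theorem abs_mul_lt_one_of_abs_lt_one {α : Type*} [Ring α] [LinearOrder α] [IsStrictOrderedRing α]
    {a b : α} (ha : |a| < 1) (hb : |b| < 1) : |a * b| < 1 :=
  (abs_mul a b).trans_lt (mul_lt_one_of_nonneg_of_lt_one_left (abs_nonneg a) ha hb.le)

section

variable {ι : Type*} [Fintype ι] [DecidableEq ι]

theorem Matrix.hasSum_diagonal_pow_mul_mul_diagonal_pow {l : ι → ℝ} (hl : ∀ i, |l i| < 1)
    (W : Matrix ι ι ℝ) :
    HasSum (fun k : ℕ => diagonal (l ^ k) * W * diagonal (l ^ k))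
      (of fun a b => W a b / (1 - l a * l b)) := by
  refine Pi.hasSum.2 fun a => Pi.hasSum.2 fun b => ?_
  simp only [mul_diagonal, diagonal_mul, Pi.pow_apply, of_apply, div_eq_mul_inv]
  have hterm : ∀ k : ℕ, l a ^ k * W a b * l b ^ k = W a b * (l a * l b) ^ k := fun k => by ring
  simpa only [hterm] using
    (hasSum_geometric_of_abs_lt_one (abs_mul_lt_one_of_abs_lt_one (hl a) (hl b))).mul_left (W a b)

theorem Matrix.pow_eq_mul_diagonal_pow_mul_inv {A P : Matrix ι ι ℝ} (hP : IsUnit P.det)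
    {l : ι → ℝ} (hA : A = P * diagonal l * P⁻¹) (k : ℕ) :
    A ^ k = P * diagonal (l ^ k) * P⁻¹ := by
  rw [hA, ← diagonal_pow]
  exact (P.nonsingInvUnit hP).conj_pow (diagonal l) k

theorem Matrix.hasSum_pow_mul_mul_transpose {A P : Matrix ι ι ℝ} (hP : IsUnit P.det)
    {l : ι → ℝ} (hl : ∀ i, |l i| < 1) (hA : A = P * diagonal l * P⁻¹) {κ : Type*} [Fintype κ]
    (B : Matrix ι κ ℝ) :
    HasSum (fun k : ℕ => A ^ k * B * (A ^ k * B)ᵀ)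
      (P * of (fun a b => (P⁻¹ * B * (P⁻¹ * B)ᵀ) a b / (1 - l a * l b)) * Pᵀ) := by
  have hterm : ∀ k : ℕ, A ^ k * B * (A ^ k * B)ᵀ =
      P * (diagonal (l ^ k) * (P⁻¹ * B * (P⁻¹ * B)ᵀ) * diagonal (l ^ k)) * Pᵀ := fun k => by
    simp [pow_eq_mul_diagonal_pow_mul_inv hP hA, transpose_mul, Matrix.mul_assoc]
  simpa only [hterm] using
    ((hasSum_diagonal_pow_mul_mul_diagonal_pow hl _).mul_left P).mul_right Pᵀ

end

open Matrix in
theorem stmt_10_general (n : ℕ) (A P : Matrix (Fin n) (Fin n) ℝ) (hP : IsUnit P.det)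
    (l : Fin n → ℝ) (hl : ∀ i, l i ∈ Set.Ioo (-1 : ℝ) 1)
    (hdiag : A = P * Matrix.diagonal l * P⁻¹)
    (B : Matrix (Fin n) (Fin 1) ℝ)
    (G : Matrix (Fin n) (Fin n) ℝ)
    (hG : ∀ i j, Filter.Tendsto
      (fun N : ℕ => (∑ k ∈ Finset.range N, A ^ k * B * (A ^ k * B)ᵀ) i j)
      Filter.atTop (nhds (G i j))) :
    G.det = P.det ^ 2 *
      (∏ i : Fin n, ∏ j ∈ Finset.Ioi i, ((l j - l i) / (1 - l i * l j)) ^ 2) *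
        ∏ i : Fin n, (∑ k : Fin n, P⁻¹ i k * B k 0) ^ 2 / (1 - l i ^ 2) := by
  have habs : ∀ i, |l i| < 1 := fun i => abs_lt.2 (hl i)
  have hne : ∀ i j, 1 - l i * l j ≠ 0 := fun i j =>
    (sub_pos.2 (lt_of_abs_lt (abs_mul_lt_one_of_abs_lt_one (habs i) (habs j)))).ne'
  set q : Fin n → ℝ := fun a => (P⁻¹ * B) a 0
  have hG_eq : G = P * (diagonal q * of (fun a b => (1 - l a * l b)⁻¹) * diagonal q) * Pᵀ := by
    refine (tendsto_nhds_unique (tendsto_pi_nhds.2 fun i => tendsto_pi_nhds.2 (hG i))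
      (hasSum_pow_mul_mul_transpose hP habs hdiag B).tendsto_sum_nat).trans ?_
    congr 2
    ext a b
    simp only [mul_diagonal, diagonal_mul, of_apply]
    simp only [q, mul_apply, transpose_apply, Fin.sum_univ_one, div_eq_mul_inv]
    ring
  rw [hG_eq, det_mul, det_mul, det_transpose, det_mul, det_mul, det_diagonal,
    det_of_inv_one_sub_mul_self l hne, prod_div_distrib, prod_pow]
  simp only [q, mul_apply, div_eq_mul_inv, prod_inv_distrib]
  ring

open Matrix in
theorem stmt_10 (n : ℕ) (A P : Matrix (Fin n) (Fin n) ℝ) (hP : IsUnit P.det)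
    (l : Fin n → ℝ) (hl : ∀ i, l i ∈ Set.Ioo (-1 : ℝ) 1) (hinj : Function.Injective l)
    (hdiag : A = P * Matrix.diagonal l * P⁻¹)
    (B : Matrix (Fin n) (Fin 1) ℝ)
    (G : Matrix (Fin n) (Fin n) ℝ)
    (hG : ∀ i j, Filter.Tendsto
      (fun N : ℕ => (∑ k ∈ Finset.range N, A ^ k * B * (A ^ k * B)ᵀ) i j)
      Filter.atTop (nhds (G i j))) :
    G.det = P.det ^ 2 *
      (∏ i : Fin n, ∏ j ∈ Finset.Ioi i, ((l j - l i) / (1 - l i * l j)) ^ 2) *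
        ∏ i : Fin n, (∑ k : Fin n, P⁻¹ i k * B k 0) ^ 2 / (1 - l i ^ 2) :=
  stmt_10_general n A P hP l hl hdiag B G hG
end

section
/- Let λ₁,…,λₙ be complex numbers with |λᵢ| < 1 for all i. Then the n×n complex matrix M with entries M_{ij} = 1/(1 - λᵢ λ̄ⱼ) is Hermitian positive semidefinite, and its determinant equals ∏_{1≤i<j≤n} |λⱼ-λᵢ|²/|1-λᵢλ̄ⱼ|² · ∏_{i=1}^{n} 1/(1-|λᵢ|²). -/
/-!
`M` is the Gram matrix of the geometric sequences `(conj λᵢ ^ k)ₖ` in `ℓ²(ℕ, ℂ)`, since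
`∑ₖ (λᵢ conj λⱼ) ^ k = 1 / (1 - λᵢ conj λⱼ)`; hence it is positive semidefinite.
For the determinant, one elimination step against the first row turns `det (1 / (1 - aᵢ bⱼ))`
into explicit factors times a matrix of the same kind of size one less. By induction this gives
a Cauchy-type product formula over any field, and `b = conj a` turns it into the stated product.
-/

open Finset Matrix
open scoped lp ComplexOrder

section CauchyDeterminant

variable {K : Type*} [Field K]

theorem det_inv_one_sub_mul_succ {n : ℕ} (a b : Fin (n + 1) → K) (h : ∀ i j, 1 - a i * b j ≠ 0) :
    det (of fun i j => (1 - a i * b j)⁻¹) =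
      (1 - a 0 * b 0)⁻¹ * ((∏ i : Fin n, (a i.succ - a 0) * (1 - a i.succ * b 0)⁻¹) *
        ((∏ j : Fin n, (b j.succ - b 0) * (1 - a 0 * b j.succ)⁻¹) *
          det (of fun i j : Fin n => (1 - a i.succ * b j.succ)⁻¹))) := by
  -- Eliminating the first column against its first entry leaves the Schur complement
  -- `(a i - a 0) (b j - b 0) / ((1 - a i b j) (1 - a i b 0) (1 - a 0 b j))` in the other rows.
  set B : Matrix (Fin (n + 1)) (Fin (n + 1)) K := of fun i j =>
    Fin.cases (1 - a 0 * b j)⁻¹ (fun i => (a i.succ - a 0) * (b j - b 0) *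
      ((1 - a i.succ * b j)⁻¹ * (1 - a i.succ * b 0)⁻¹ * (1 - a 0 * b j)⁻¹)) i
  have hrow : det (of fun i j => (1 - a i * b j)⁻¹) = det B := by
    refine det_eq_of_forall_row_eq_smul_add_const
      (Fin.cons 0 fun i => (1 - a 0 * b 0) * (1 - a i.succ * b 0)⁻¹) 0 rfl fun i j => ?_
    refine Fin.cases ?_ (fun i => ?_) i
    · simp [B]
    · have := h i.succ j; have := h i.succ 0; have := h 0 j; have := h 0 0
      simp only [B, of_apply, Fin.cases_succ, Fin.cases_zero, Fin.cons_succ]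
      rw [eq_comm, ← sub_eq_zero]
      field_simp
      ring
  have hlaplace : det B = (1 - a 0 * b 0)⁻¹ * det (B.submatrix Fin.succ Fin.succ) := by
    simp [det_succ_column_zero B, Fin.sum_univ_succ, B]
  have hsub : B.submatrix Fin.succ Fin.succ = of fun i j =>
      (a i.succ - a 0) * (1 - a i.succ * b 0)⁻¹ * (of fun i j =>
        (b j.succ - b 0) * (1 - a 0 * b j.succ)⁻¹ *
          (of fun i j : Fin n => (1 - a i.succ * b j.succ)⁻¹) i j) i j := by
    ext i j
    simp only [B, submatrix_apply, of_apply, Fin.cases_succ]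
    ring
  rw [hrow, hlaplace, hsub, det_mul_column, det_mul_row]

theorem det_inv_one_sub_mul {n : ℕ} (a b : Fin n → K) (h : ∀ i j, 1 - a i * b j ≠ 0) :
    det (of fun i j => (1 - a i * b j)⁻¹) =
      (∏ i : Fin n, ∏ j ∈ Ioi i,
        (a j - a i) * (b j - b i) * ((1 - a i * b j)⁻¹ * (1 - a j * b i)⁻¹)) *
        ∏ i : Fin n, (1 - a i * b i)⁻¹ := by
  induction n with
  | zero => simp
  | succ n ih =>
    rw [det_inv_one_sub_mul_succ a b h,
      ih (fun i => a i.succ) (fun j => b j.succ) fun i j => h i.succ j.succ,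
      Fin.prod_univ_succ, Fin.prod_Ioi_zero, Fin.prod_univ_succ (fun i => (1 - a i * b i)⁻¹)]
    simp only [Fin.prod_Ioi_succ]
    have hfirst : (∏ i : Fin n, (a i.succ - a 0) * (1 - a i.succ * b 0)⁻¹) *
        ∏ j : Fin n, (b j.succ - b 0) * (1 - a 0 * b j.succ)⁻¹ =
        ∏ j : Fin n, (a j.succ - a 0) * (b j.succ - b 0) *
          ((1 - a 0 * b j.succ)⁻¹ * (1 - a j.succ * b 0)⁻¹) := by
      rw [← prod_mul_distrib]
      exact prod_congr rfl fun j _ => by ring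
    rw [← hfirst]
    ring

end CauchyDeterminant

theorem norm_mul_lt_one {α : Type*} [NormedDivisionRing α] {z w : α} (hz : ‖z‖ < 1)
    (hw : ‖w‖ < 1) : ‖z * w‖ < 1 := by
  rw [norm_mul]
  exact mul_lt_one_of_nonneg_of_lt_one_left (norm_nonneg z) hz hw.le

section GeometricSequence

variable {𝕜 : Type*} [RCLike 𝕜]

theorem memℓp_geometric {z : 𝕜} (hz : ‖z‖ < 1) : Memℓp (fun k : ℕ => z ^ k) 2 := by
  refine memℓp_gen ?_
  have := summable_geometric_of_lt_one (by positivity) (pow_lt_one₀ (norm_nonneg z) hz two_ne_zero)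
  simp only [ENNReal.toReal_ofNat, norm_pow, Real.rpow_two]
  simpa only [← pow_mul, mul_comm] using this

def geometricL2 (z : 𝕜) (hz : ‖z‖ < 1) : ℓ²(ℕ, 𝕜) :=
  ⟨fun k => z ^ k, memℓp_geometric hz⟩

theorem inner_geometricL2 {z w : 𝕜} (hz : ‖z‖ < 1) (hw : ‖w‖ < 1) :
    inner 𝕜 (geometricL2 z hz) (geometricL2 w hw) = (1 - starRingEnd 𝕜 z * w)⁻¹ := by
  refine (lp.hasSum_inner _ _).unique ?_
  simpa [geometricL2, mul_pow, mul_comm] using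
    hasSum_geometric_of_norm_lt_one (norm_mul_lt_one (by rwa [RCLike.norm_conj]) hw)

end GeometricSequence

theorem stmt_14 (n : ℕ) (l : Fin n → ℂ) (hl : ∀ i, ‖l i‖ < 1) :
    (Matrix.of fun i j : Fin n => 1 / (1 - l i * (starRingEnd ℂ) (l j))).PosSemidef ∧
      Matrix.det (Matrix.of fun i j : Fin n => 1 / (1 - l i * (starRingEnd ℂ) (l j))) =
        (((∏ i : Fin n, ∏ j ∈ Finset.Ioi i,
            ‖l j - l i‖ ^ 2 / ‖1 - l i * (starRingEnd ℂ) (l j)‖ ^ 2) *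
          ∏ i : Fin n, 1 / (1 - ‖l i‖ ^ 2) : ℝ) : ℂ) := by
  have hconj : ∀ i, ‖starRingEnd ℂ (l i)‖ < 1 := fun i => by simpa using hl i
  have hgram : (of fun i j : Fin n => 1 / (1 - l i * starRingEnd ℂ (l j))) =
      gram ℂ fun i => geometricL2 _ (hconj i) := by
    ext i j
    simp [gram_apply, inner_geometricL2]
  have hne : ∀ i j, 1 - l i * starRingEnd ℂ (l j) ≠ 0 := fun i j h => by
    simpa [← sub_eq_zero.1 h] using norm_mul_lt_one (hl i) (hconj j)
  refine ⟨hgram ▸ posSemidef_gram ℂ _, ?_⟩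
  simp only [one_div]
  rw [det_inv_one_sub_mul l _ hne]
  push_cast
  simp only [← Complex.mul_conj', map_sub, map_mul, map_one, Complex.conj_conj]
  congr 1
  refine prod_congr rfl fun i _ => prod_congr rfl fun j _ => ?_
  rw [div_eq_mul_inv, mul_inv]
  ring
end

section
/- Let λ₁,…,λₙ ∈ (-1,1) be pairwise distinct and b₁,…,bₙ nonzero reals. Then the infinite-horizon controllability Grammian G_∞ with entries bᵢbⱼ/(1-λᵢλⱼ) is symmetric positive definite, so the controllability ellipsoid E_∞ = {G_∞^{1/2} z : ‖z‖₂ ≤ 1} is a nondegenerate ellipsoid in ℝⁿ. -/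
/-!
Expanding `1 / (1 - λᵢλⱼ)` as a geometric series writes the quadratic form of `G_∞` as
`xᵀ G_∞ x = ∑ₖ (∑ᵢ xᵢ bᵢ λᵢᵏ)²`. This is a sum of squares, and it is positive for `x ≠ 0`: the
vector `(xᵢ bᵢ)ᵢ` is nonzero, so by invertibility of the Vandermonde matrix of the distinct `λᵢ`
one of its first `n` power sums `∑ᵢ xᵢ bᵢ λᵢᵏ` is nonzero.
-/

open Matrix

section GeometricSeries

variable {K : Type*} [NormedField K]

lemma hasSum_mul_pow_mul_mul_pow {x y : K} (hx : ‖x‖ < 1) (hy : ‖y‖ < 1) (a c : K) :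
    HasSum (fun k : ℕ => a * x ^ k * (c * y ^ k)) (a * c / (1 - x * y)) := by
  have hxy : ‖x * y‖ < 1 := by
    rw [norm_mul]
    exact mul_lt_one_of_nonneg_of_lt_one_left (norm_nonneg x) hx hy.le
  simpa only [mul_pow, mul_mul_mul_comm, div_eq_mul_inv] using
    (hasSum_geometric_of_norm_lt_one hxy).mul_left (a * c)

lemma hasSum_sq_sum_mul_pow {ι : Type*} [Fintype ι] {l : ι → K} (hl : ∀ i, ‖l i‖ < 1)
    (c : ι → K) :
    HasSum (fun k : ℕ => (∑ i, c i * l i ^ k) ^ 2)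
      (∑ i, ∑ j, c i * c j / (1 - l i * l j)) := by
  simp_rw [sq, Finset.sum_mul_sum]
  exact hasSum_sum fun i _ => hasSum_sum fun j _ =>
    hasSum_mul_pow_mul_mul_pow (hl i) (hl j) (c i) (c j)

end GeometricSeries

lemma exists_sum_mul_pow_ne_zero {R : Type*} [CommRing R] [IsDomain R] {n : ℕ}
    {l c : Fin n → R} (hl : Function.Injective l) (hc : c ≠ 0) :
    ∃ k : Fin n, ∑ i, c i * l i ^ (k : ℕ) ≠ 0 := by
  by_contra! h
  exact hc (eq_zero_of_forall_pow_sum_mul_pow_eq_zero hl h)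

lemma dotProduct_mulVec_gramian {ι : Type*} [Fintype ι] (l b x : ι → ℝ) :
    x ⬝ᵥ ((of fun i j => b i * b j / (1 - l i * l j)) *ᵥ x) =
      ∑ i, ∑ j, x i * b i * (x j * b j) / (1 - l i * l j) := by
  simp only [dotProduct, mulVec, of_apply, Finset.mul_sum]
  refine Finset.sum_congr rfl fun i _ => Finset.sum_congr rfl fun j _ => ?_
  ring

lemma posDef_gramian {n : ℕ} {l b : Fin n → ℝ} (hl : ∀ i, |l i| < 1)
    (hinj : Function.Injective l) (hb : ∀ i, b i ≠ 0) :
    (of fun i j : Fin n => b i * b j / (1 - l i * l j)).PosDef := by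
  refine PosDef.of_dotProduct_mulVec_pos ?_ fun x hx => ?_
  · ext i j
    simp only [conjTranspose_apply, of_apply, star_trivial]
    ring
  set c : Fin n → ℝ := fun i => x i * b i
  have hc : c ≠ 0 := fun h => hx <| funext fun i =>
    (mul_eq_zero.mp (congrFun h i)).resolve_right (hb i)
  obtain ⟨k, hk⟩ := exists_sum_mul_pow_ne_zero hinj hc
  have hsum := hasSum_sq_sum_mul_pow (fun i => (Real.norm_eq_abs (l i)).trans_lt (hl i)) c
  rw [star_trivial, dotProduct_mulVec_gramian]
  change 0 < ∑ i, ∑ j, c i * c j / (1 - l i * l j)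
  rw [← hsum.tsum_eq]
  exact hsum.summable.tsum_pos (fun _ => sq_nonneg _) k (sq_pos_of_ne_zero hk)

theorem stmt_15 (n : ℕ) (l b : Fin n → ℝ) (hl : ∀ i, l i ∈ Set.Ioo (-1 : ℝ) 1)
    (hinj : Function.Injective l) (hb : ∀ i, b i ≠ 0) :
    (Matrix.of fun i j : Fin n => b i * b j / (1 - l i * l j)).PosDef ∧
      0 < Matrix.det (Matrix.of fun i j : Fin n => b i * b j / (1 - l i * l j)) := by
  have hpd := posDef_gramian (fun i => abs_lt.mpr (hl i)) hinj hb
  exact ⟨hpd, hpd.det_pos⟩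
end
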